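/- Let X be a complex Banach space, B its open unit ball, e ∈ ∂B, e* a support functional at e, and f(x) = x + P₂(x) + P₃(x) + ⋯ holomorphic near 0 with homogeneous polynomial terms P_k. Define the Fekete–Szegő mapping Ψ_e(f, λ, μ) = P₃(e) − (μ/2) D²f(0)[e, P₂(e)] − (λ−μ)⟨P₂(e), e*⟩ P₂(e). If P₂ is of one-dimensional type, i.e. P₂(x) = s(x)·x for a homogeneous degree-2 scalar polynomial s, then Ψ_e(f, λ, μ) = P₃(e) − λ⟨P₂(e), e*⟩ P₂(e); in particular Ψ_e(f, λ, μ) does not depend on μ. -/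

import Mathlib

/-!
Since `D²f(0)[x,x] = 2 P₂(x)` and `D²f(0)` is linear in its second slot, `P₂(e) = c e` gives
`D²f(0)[e, P₂(e)] = 2c P₂(e)`, and `⟨P₂(e), e*⟩ = c` because `⟨e, e*⟩ = 1`. Hence the `μ`-term
`(μ/2) D²f(0)[e, P₂(e)]` equals `μ ⟨P₂(e), e*⟩ P₂(e)` and cancels against the `μ` in `(λ - μ)`.
-/

variable {X : Type*} [NormedAddCommGroup X] [NormedSpace ℂ X]

/-- The `k`-th homogeneous term `P_k(x) = (1/k!) Dᵏf(0)[xᵏ]` of a mapping `f` at the origin. -/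
noncomputable def homTerm (f : X → X) (k : ℕ) (x : X) : X :=
  (k.factorial : ℂ)⁻¹ • iteratedFDeriv ℂ k f 0 (fun _ => x)

/-- The second Fréchet derivative at the origin, `D²f(0)[x,y]`. -/
noncomputable def D2 (f : X → X) (x y : X) : X :=
  iteratedFDeriv ℂ 2 f 0 ![x, y]

/-- The Fekete–Szegő mapping
`Ψ_e(f,λ,μ) = P₃(e) - (μ/2)D²f(0)[e,P₂(e)] - (λ-μ)⟨P₂(e),e*⟩P₂(e)`. -/
noncomputable def FS (f : X → X) (e : X) (estar : X →L[ℂ] ℂ) (lam mu : ℂ) : X :=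
  homTerm f 3 e - (mu / 2) • D2 f e (homTerm f 2 e)
    - ((lam - mu) * estar (homTerm f 2 e)) • homTerm f 2 e

theorem D2_self (f : X → X) (x : X) : D2 f x x = (2 : ℂ) • homTerm f 2 x := by
  have hdiag : (fun _ : Fin 2 => x) = ![x, x] := by
    funext i; fin_cases i <;> rfl
  rw [homTerm, hdiag, smul_smul]
  norm_num [Nat.factorial, D2]

theorem D2_smul_right (f : X → X) (x y : X) (c : ℂ) : D2 f x (c • y) = c • D2 f x y := by
  have hupd : ∀ z : X, ![x, z] = Function.update ![x, y] 1 z := by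
    intro z; funext i; fin_cases i <;> rfl
  rw [D2, D2, hupd (c • y), ContinuousMultilinearMap.map_update_smul, ← hupd y]

theorem D2_homTerm_two_of_eq_smul {f : X → X} {x : X} {c : ℂ} (h : homTerm f 2 x = c • x) :
    D2 f x (homTerm f 2 x) = (2 * c) • homTerm f 2 x := by
  rw [h, D2_smul_right, D2_self, h, smul_smul, smul_smul, smul_smul, mul_comm c 2]

theorem FS_eq_of_D2_homTerm_two {f : X → X} {e : X} {estar : X →L[ℂ] ℂ}
    (h : D2 f e (homTerm f 2 e) = (2 * estar (homTerm f 2 e)) • homTerm f 2 e) (lam mu : ℂ) :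
    FS f e estar lam mu = homTerm f 3 e - (lam * estar (homTerm f 2 e)) • homTerm f 2 e := by
  rw [FS, h, smul_smul, sub_sub, ← add_smul]
  congr 2
  ring

theorem FS_one_dim_P2_general (f : X → X)
    (e : X) (estar : X →L[ℂ] ℂ) (hee : estar e = 1)
    (s : X → ℂ)
    (hP2 : ∀ x, homTerm f 2 x = s x • x) (lam mu : ℂ) :
    FS f e estar lam mu =
      homTerm f 3 e - (lam * estar (homTerm f 2 e)) • homTerm f 2 e := by
  have hpair : estar (homTerm f 2 e) = s e := by
    rw [hP2, map_smul, hee, smul_eq_mul, mul_one]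
  refine FS_eq_of_D2_homTerm_two ?_ lam mu
  rw [hpair]
  exact D2_homTerm_two_of_eq_smul (hP2 e)

/-- If `P₂` is of one-dimensional type, the Fekete–Szegő mapping does not depend on `μ`. -/
theorem FS_one_dim_P2 (f : X → X) (hf : AnalyticAt ℂ f 0) (hf0 : f 0 = 0)
    (hf1 : fderiv ℂ f 0 = ContinuousLinearMap.id ℂ X)
    (e : X) (he : ‖e‖ = 1) (estar : X →L[ℂ] ℂ) (hes : ‖estar‖ = 1) (hee : estar e = 1)
    (s : X → ℂ) (hshom : ∀ (c : ℂ) (x : X), s (c • x) = c ^ 2 * s x)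
    (hP2 : ∀ x, homTerm f 2 x = s x • x) (lam mu : ℂ) :
    FS f e estar lam mu =
      homTerm f 3 e - (lam * estar (homTerm f 2 e)) • homTerm f 2 e :=
  FS_one_dim_P2_general f e estar hee s hP2 lam mu
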